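/- arXiv:1912.13086 — 7 statements merged into one kernel-verified Lean document; each statement's English description precedes it below -/
import Mathlib

section
/- Let V and Q₀ be real Hilbert spaces, a : V × V → ℝ a symmetric bilinear form with |a(u,v)| ≤ C_a‖u‖‖v‖ and a(v,v) ≥ α‖v‖² (α > 0) for all u,v ∈ V, A : V → V the continuous linear isomorphism with ⟪A u, v⟫_V = a(u,v), and B : V → Q₀ a continuous linear map satisfying the inf-sup condition sup_{v ∈ V, ‖v‖ ≤ 1} ⟪B v, q⟫ ≥ β‖q‖ for all q ∈ Q₀ with β > 0, and ‖B v‖ ≤ C_b‖v‖. Then the Schur complement operator C := B ∘ A⁻¹ ∘ B* : Q₀ → Q₀ is self-adjoint, bounded with ‖C q‖ ≤ (C_b²/α)‖q‖ for all q, and elliptic: ⟪C q, q⟫ ≥ (α β² / C_a²)‖q‖² for all q ∈ Q₀. -/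
open scoped RealInnerProductSpace

/-- In the setting of real Hilbert spaces `V`, `Q₀`, with `a` a symmetric
bounded (constant `Ca`) coercive (constant `α`) bilinear form, `A : V ≃L V` the continuous
linear isomorphism representing `a` via the inner product, and `B : V → Q₀` bounded
(constant `Cb`) and inf-sup stable (constant `β`), the Schur complement operator
`C = B ∘ A⁻¹ ∘ B*` is self-adjoint, bounded with `‖C q‖ ≤ (Cb² / α) * ‖q‖`, and elliptic
with `⟪C q, q⟫ ≥ (α * β² / Ca²) * ‖q‖²`. -/
theorem stmt_3 {V Q₀ : Type*} [NormedAddCommGroup V] [InnerProductSpace ℝ V] [CompleteSpace V]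
    [NormedAddCommGroup Q₀] [InnerProductSpace ℝ Q₀] [CompleteSpace Q₀]
    (a : V →ₗ[ℝ] V →ₗ[ℝ] ℝ) (Ca α Cb β : ℝ) (hCa : 0 < Ca) (hα : 0 < α) (hβ : 0 < β)
    (hsymm : ∀ u v : V, a u v = a v u)
    (habound : ∀ u v : V, |a u v| ≤ Ca * ‖u‖ * ‖v‖)
    (hcoer : ∀ v : V, α * ‖v‖ ^ 2 ≤ a v v)
    (A : V ≃L[ℝ] V) (hA : ∀ u v : V, ⟪A u, v⟫ = a u v)
    (B : V →L[ℝ] Q₀) (hbbound : ∀ v : V, ‖B v‖ ≤ Cb * ‖v‖)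
    (hinfsup : ∀ q : Q₀, β * ‖q‖ ≤ ⨆ v : {v : V // ‖v‖ ≤ 1}, ⟪B v.1, q⟫) :
    let C : Q₀ →L[ℝ] Q₀ :=
      B ∘L (A.symm : V →L[ℝ] V) ∘L ContinuousLinearMap.adjoint B
    (∀ p q : Q₀, ⟪C p, q⟫ = ⟪p, C q⟫) ∧
      (∀ q : Q₀, ‖C q‖ ≤ Cb ^ 2 / α * ‖q‖) ∧
      (∀ q : Q₀, α * β ^ 2 / Ca ^ 2 * ‖q‖ ^ 2 ≤ ⟪C q, q⟫) := by
  intro C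
  have hNE : Nonempty {v : V // ‖v‖ ≤ 1} := ⟨⟨0, by simp⟩⟩
  -- A is self-adjoint
  have hAsa : ∀ u v : V, ⟪A u, v⟫ = ⟪u, A v⟫ := by
    intro u v
    rw [hA, hsymm, ← hA, real_inner_comm]
  have hTsa : ∀ u v : V, ⟪A.symm u, v⟫ = ⟪u, A.symm v⟫ := by
    intro u v
    calc ⟪A.symm u, v⟫ = ⟪A.symm u, A (A.symm v)⟫ := by rw [A.apply_symm_apply]
    _ = ⟪A (A.symm u), A.symm v⟫ := (hAsa _ _).symm
    _ = ⟪u, A.symm v⟫ := by rw [A.apply_symm_apply]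
  -- norm bounds on A and A.symm
  have hAnorm : ∀ u : V, ‖A u‖ ≤ Ca * ‖u‖ := by
    intro u
    rcases eq_or_ne (A u) 0 with h | h
    · rw [h, norm_zero]; positivity
    · have h1 : ⟪A u, A u⟫ = a u (A u) := hA u (A u)
      have h2 : a u (A u) ≤ Ca * ‖u‖ * ‖A u‖ := (le_abs_self _).trans (habound u (A u))
      have h3 : ‖A u‖ ^ 2 ≤ Ca * ‖u‖ * ‖A u‖ := by
        rw [← real_inner_self_eq_norm_sq, h1]; exact h2
      have hpos : 0 < ‖A u‖ := norm_pos_iff.mpr h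
      nlinarith
  have hTnorm : ∀ w : V, α * ‖A.symm w‖ ≤ ‖w‖ := by
    intro w
    set v := A.symm w with hv
    have h1 : α * ‖v‖ ^ 2 ≤ a v v := hcoer v
    have h2 : a v v = ⟪A v, v⟫ := (hA v v).symm
    have h4 : A v = w := A.apply_symm_apply w
    have h3 : ⟪A v, v⟫ ≤ ‖w‖ * ‖v‖ := by rw [h4]; exact real_inner_le_norm _ _
    rcases (norm_nonneg v).eq_or_lt with h | h
    · rw [← h, mul_zero]; exact norm_nonneg _
    · nlinarith
  -- pointwise formula for ⟪C p, q⟫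
  have hC : ∀ p q : Q₀, ⟪C p, q⟫ =
      ⟪A.symm (ContinuousLinearMap.adjoint B p), ContinuousLinearMap.adjoint B q⟫ := by
    intro p q
    show ⟪B (A.symm (ContinuousLinearMap.adjoint B p)), q⟫ = _
    rw [real_inner_comm, ← ContinuousLinearMap.adjoint_inner_left, real_inner_comm]
  -- self-adjointness of C
  have hself : ∀ p q : Q₀, ⟪C p, q⟫ = ⟪p, C q⟫ := by
    intro p q
    calc ⟪C p, q⟫ = _ := hC p q
    _ = ⟪ContinuousLinearMap.adjoint B p, A.symm (ContinuousLinearMap.adjoint B q)⟫ := hTsa _ _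
    _ = ⟪A.symm (ContinuousLinearMap.adjoint B q), ContinuousLinearMap.adjoint B p⟫ :=
        real_inner_comm _ _
    _ = ⟪C q, p⟫ := (hC q p).symm
    _ = ⟪p, C q⟫ := real_inner_comm _ _
  refine ⟨hself, ?_, ?_⟩
  · -- boundedness
    intro q
    rcases eq_or_ne q 0 with rfl | hq
    · simp
    · -- Cb > 0 in this case
      have hsup : (0:ℝ) < ⨆ v : {v : V // ‖v‖ ≤ 1}, ⟪B v.1, q⟫ :=
        lt_of_lt_of_le (mul_pos hβ (norm_pos_iff.mpr hq)) (hinfsup q)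
      have hvex : ∃ v : {v : V // ‖v‖ ≤ 1}, 0 < ⟪B v.1, q⟫ := by
        by_contra h
        push_neg at h
        have : (⨆ v : {v : V // ‖v‖ ≤ 1}, ⟪B v.1, q⟫) ≤ 0 := ciSup_le h
        linarith
      obtain ⟨v, hv⟩ := hvex
      have hBv : 0 < ‖B v.1‖ := by
        rcases eq_or_ne (B v.1) 0 with h | h
        · rw [h] at hv; simp at hv
        · exact norm_pos_iff.mpr h
      have hCb : 0 < Cb := by
        have := hbbound v.1
        have := v.2
        nlinarith [norm_nonneg v.1]
      -- ‖B* q‖ ≤ Cb ‖q‖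
      set w := ContinuousLinearMap.adjoint B q with hw
      have hwb : ‖w‖ ≤ Cb * ‖q‖ := by
        rcases eq_or_ne w 0 with h | h
        · rw [h, norm_zero]; positivity
        · have h1 : ‖w‖ ^ 2 = ⟪B w, q⟫ := by
            rw [← real_inner_self_eq_norm_sq, hw, ContinuousLinearMap.adjoint_inner_left]
            rw [real_inner_comm]
          have h2 : ⟪B w, q⟫ ≤ ‖B w‖ * ‖q‖ := real_inner_le_norm _ _
          have h3 : ‖B w‖ ≤ Cb * ‖w‖ := hbbound w
          have hpos : 0 < ‖w‖ := norm_pos_iff.mpr h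
          nlinarith [norm_nonneg q]
      have h1 : ‖C q‖ ≤ Cb * ‖A.symm w‖ := hbbound _
      have h2 : α * ‖A.symm w‖ ≤ ‖w‖ := hTnorm w
      rw [div_mul_eq_mul_div, le_div_iff₀ hα]
      nlinarith [norm_nonneg (A.symm w)]
  · -- ellipticity
    intro q
    set w := ContinuousLinearMap.adjoint B q with hw
    set t := A.symm w with ht
    have hct : ⟪C q, q⟫ = ⟪t, w⟫ := hC q q
    have hcoert : α * ‖t‖ ^ 2 ≤ ⟪t, w⟫ := by
      have h4 : A t = w := A.apply_symm_apply w
      have : ⟪t, w⟫ = a t t := by rw [← h4, real_inner_comm, hA]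
      rw [this]; exact hcoer t
    -- ‖w‖ ≤ Ca ‖t‖
    have hwt : ‖w‖ ≤ Ca * ‖t‖ := by
      have h4 : A t = w := A.apply_symm_apply w
      rw [← h4]; exact hAnorm t
    -- β ‖q‖ ≤ ‖w‖
    have hbq : β * ‖q‖ ≤ ‖w‖ := by
      refine (hinfsup q).trans (ciSup_le ?_)
      intro v
      calc ⟪B v.1, q⟫ = ⟪v.1, w⟫ := (ContinuousLinearMap.adjoint_inner_right B v.1 q).symm
      _ ≤ ‖v.1‖ * ‖w‖ := real_inner_le_norm _ _
      _ ≤ 1 * ‖w‖ := by gcongr; exact v.2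
      _ = ‖w‖ := one_mul _
    rw [hct]
    have hq0 : 0 ≤ β * ‖q‖ := by positivity
    rw [div_mul_eq_mul_div, div_le_iff₀ (by positivity : (0:ℝ) < Ca ^ 2)]
    have h5 : (β * ‖q‖) ^ 2 ≤ (Ca * ‖t‖) ^ 2 := by
      have := hbq.trans hwt
      nlinarith
    nlinarith [mul_le_mul_of_nonneg_left h5 hα.le,
      mul_le_mul_of_nonneg_left hcoert (sq_nonneg Ca)]
end

section
/- Let V, Q be real Hilbert spaces, a : V × V → ℝ a continuous symmetric bilinear form, k : Q × Q → ℝ and b : V × Q → ℝ continuous bilinear forms, and f : ℝ → V*, g : ℝ → Q* functions into the topological duals. Suppose u : ℝ → V is differentiable at t with derivative u'(t), p : ℝ → Q, and for every s in a neighbourhood of t the equation a(u(s),v) − b(v,p(s)) = f(s)(v) holds for all v ∈ V, and at time t the equation b(u'(t),q) + k(p(t),q) = g(t)(q) holds for all q ∈ Q. Then the function s ↦ ½ a(u(s),u(s)) is differentiable at t with derivative f(t)(u'(t)) + g(t)(p(t)) − k(p(t),p(t)). -/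
/-! The form `a` is bounded, hence a continuous bilinear map, so the product rule together with
symmetry gives `d/ds ½ a(u, u) = a(u(t), u'(t))`. Testing the first equation at `s = t` with
`v = u'(t)` and the second with `q = p(t)` eliminates the coupling term `b(u'(t), p(t))`. -/

theorem ContinuousLinearMap.hasDerivAt_half_apply_self {E : Type*} [NormedAddCommGroup E]
    [NormedSpace ℝ E] {B : E →L[ℝ] E →L[ℝ] ℝ} (hB : ∀ x y, B x y = B y x) {u : ℝ → E}
    {u' : E} {t : ℝ} (hu : HasDerivAt u u' t) :
    HasDerivAt (fun s => 1 / 2 * B (u s) (u s)) (B (u t) u') t := by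
  have h := (B.hasDerivAt_of_bilinear (fun _ => hu) (fun _ => hu)).const_mul (1 / 2 : ℝ)
  rw [hB u' (u t), ← two_mul, one_div, inv_mul_cancel_left₀ two_ne_zero] at h
  simpa only [one_div] using h

theorem stmt_4_general {V Q : Type*} [NormedAddCommGroup V] [InnerProductSpace ℝ V]
    [NormedAddCommGroup Q] [InnerProductSpace ℝ Q]
    (a : V →ₗ[ℝ] V →ₗ[ℝ] ℝ) (k : Q →ₗ[ℝ] Q →ₗ[ℝ] ℝ) (b : V →ₗ[ℝ] Q →ₗ[ℝ] ℝ)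
    (Ca : ℝ)
    (hsymm : ∀ u v : V, a u v = a v u)
    (ha : ∀ u v : V, |a u v| ≤ Ca * ‖u‖ * ‖v‖)
    (f : ℝ → V →L[ℝ] ℝ) (g : ℝ → Q →L[ℝ] ℝ)
    (u : ℝ → V) (p : ℝ → Q) (t : ℝ) (u' : V)
    (hu : HasDerivAt u u' t)
    (heq1 : ∀ᶠ s in nhds t, ∀ v : V, a (u s) v - b v (p s) = f s v)
    (heq2 : ∀ q : Q, b u' q + k (p t) q = g t q) :
    HasDerivAt (fun s => (1 / 2) * a (u s) (u s))
      (f t u' + g t (p t) - k (p t) (p t)) t := by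
  let A : V →L[ℝ] V →L[ℝ] ℝ :=
    a.mkContinuous₂ Ca fun x y => by simpa only [Real.norm_eq_abs] using ha x y
  have energy : a (u t) u' = f t u' + g t (p t) - k (p t) (p t) := by
    linarith [heq1.self_of_nhds u', heq2 (p t)]
  rw [← energy]
  exact A.hasDerivAt_half_apply_self hsymm hu

/-- Energy-dissipation derivative identity. If `(u, p)` solves the abstract
Biot system with symmetric continuous form `a`, continuous forms `k`, `b`, data `f`, `g`,
where the first equation holds in a neighbourhood of `t` and the second at `t`, and `u` has
derivative `u'` at `t`, then `s ↦ ½ a(u(s), u(s))` is differentiable at `t` with derivative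
`f(t)(u') + g(t)(p(t)) − k(p(t), p(t))`. -/
theorem stmt_4 {V Q : Type*} [NormedAddCommGroup V] [InnerProductSpace ℝ V] [CompleteSpace V]
    [NormedAddCommGroup Q] [InnerProductSpace ℝ Q] [CompleteSpace Q]
    (a : V →ₗ[ℝ] V →ₗ[ℝ] ℝ) (k : Q →ₗ[ℝ] Q →ₗ[ℝ] ℝ) (b : V →ₗ[ℝ] Q →ₗ[ℝ] ℝ)
    (Ca Ck Cb : ℝ)
    (hsymm : ∀ u v : V, a u v = a v u)
    (ha : ∀ u v : V, |a u v| ≤ Ca * ‖u‖ * ‖v‖)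
    (hk : ∀ p q : Q, |k p q| ≤ Ck * ‖p‖ * ‖q‖)
    (hb : ∀ (v : V) (q : Q), |b v q| ≤ Cb * ‖v‖ * ‖q‖)
    (f : ℝ → V →L[ℝ] ℝ) (g : ℝ → Q →L[ℝ] ℝ)
    (u : ℝ → V) (p : ℝ → Q) (t : ℝ) (u' : V)
    (hu : HasDerivAt u u' t)
    (heq1 : ∀ᶠ s in nhds t, ∀ v : V, a (u s) v - b v (p s) = f s v)
    (heq2 : ∀ q : Q, b u' q + k (p t) q = g t q) :
    HasDerivAt (fun s => (1 / 2) * a (u s) (u s))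
      (f t u' + g t (p t) - k (p t) (p t)) t :=
  stmt_4_general a k b Ca hsymm ha f g u p t u' hu heq1 heq2
end

section
/- Let V, Q be real Hilbert spaces, a : V × V → ℝ a continuous symmetric bilinear form with a(v,v) ≥ α‖v‖² for all v ∈ V (α > 0), k : Q × Q → ℝ a continuous bilinear form with k(q,q) ≥ κ‖q‖² for all q ∈ Q (κ > 0), b : V × Q → ℝ a continuous bilinear form, and f : ℝ → V*, g : ℝ → Q*. Suppose (u₁,p₁) and (u₂,p₂) are two pairs of functions on [0,T] with u₁, u₂ differentiable on [0,T], such that for i = 1,2 and every t ∈ [0,T]: a(uᵢ(t),v) − b(v,pᵢ(t)) = f(t)(v) for all v ∈ V and b(uᵢ'(t),q) + k(pᵢ(t),q) = g(t)(q) for all q ∈ Q, and u₁(0) = u₂(0). Then u₁(t) = u₂(t) and p₁(t) = p₂(t) for all t ∈ [0,T]. -/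
/-- Uniqueness for the abstract Biot system. With `a` symmetric, continuous and
coercive, `k` continuous and coercive, `b` continuous, two solutions `(u₁, p₁)` and
`(u₂, p₂)` on `[0, T]` with the same initial displacement `u₁(0) = u₂(0)` coincide on
`[0, T]`. -/
theorem stmt_6 {V Q : Type*} [NormedAddCommGroup V] [InnerProductSpace ℝ V] [CompleteSpace V]
    [NormedAddCommGroup Q] [InnerProductSpace ℝ Q] [CompleteSpace Q]
    (a : V →ₗ[ℝ] V →ₗ[ℝ] ℝ) (k : Q →ₗ[ℝ] Q →ₗ[ℝ] ℝ) (b : V →ₗ[ℝ] Q →ₗ[ℝ] ℝ)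
    (Ca Ck Cb α κ : ℝ) (hα : 0 < α) (hκ : 0 < κ)
    (hsymm : ∀ u v : V, a u v = a v u)
    (ha : ∀ u v : V, |a u v| ≤ Ca * ‖u‖ * ‖v‖)
    (hacoer : ∀ v : V, α * ‖v‖ ^ 2 ≤ a v v)
    (hk : ∀ p q : Q, |k p q| ≤ Ck * ‖p‖ * ‖q‖)
    (hkcoer : ∀ q : Q, κ * ‖q‖ ^ 2 ≤ k q q)
    (hb : ∀ (v : V) (q : Q), |b v q| ≤ Cb * ‖v‖ * ‖q‖)
    (f : ℝ → V →L[ℝ] ℝ) (g : ℝ → Q →L[ℝ] ℝ) (T : ℝ)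
    (u₁ u₂ u₁' u₂' : ℝ → V) (p₁ p₂ : ℝ → Q)
    (hu₁ : ∀ t ∈ Set.Icc (0 : ℝ) T, HasDerivAt u₁ (u₁' t) t)
    (hu₂ : ∀ t ∈ Set.Icc (0 : ℝ) T, HasDerivAt u₂ (u₂' t) t)
    (heq1₁ : ∀ t ∈ Set.Icc (0 : ℝ) T, ∀ v : V, a (u₁ t) v - b v (p₁ t) = f t v)
    (heq2₁ : ∀ t ∈ Set.Icc (0 : ℝ) T, ∀ q : Q, b (u₁' t) q + k (p₁ t) q = g t q)
    (heq1₂ : ∀ t ∈ Set.Icc (0 : ℝ) T, ∀ v : V, a (u₂ t) v - b v (p₂ t) = f t v)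
    (heq2₂ : ∀ t ∈ Set.Icc (0 : ℝ) T, ∀ q : Q, b (u₂' t) q + k (p₂ t) q = g t q)
    (h0 : u₁ 0 = u₂ 0) :
    ∀ t ∈ Set.Icc (0 : ℝ) T, u₁ t = u₂ t ∧ p₁ t = p₂ t := by

  -- Setup: differences
  set w : ℝ → V := fun t => u₁ t - u₂ t with hw_def
  set w' : ℝ → V := fun t => u₁' t - u₂' t with hw'_def
  set r : ℝ → Q := fun t => p₁ t - p₂ t with hr_def
  have hw : ∀ t ∈ Set.Icc (0 : ℝ) T, HasDerivAt w (w' t) t := fun t ht =>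
    (hu₁ t ht).sub (hu₂ t ht)
  -- a(w,v) = b(v,r)
  have haz : ∀ t ∈ Set.Icc (0 : ℝ) T, ∀ v : V, a (w t) v = b v (r t) := by
    intro t ht v
    have h1 := heq1₁ t ht v
    have h2 := heq1₂ t ht v
    simp only [hw_def, hr_def, map_sub, LinearMap.sub_apply]
    linarith
  -- b(w',q) = -k(r,q)
  have hbz : ∀ t ∈ Set.Icc (0 : ℝ) T, ∀ q : Q, b (w' t) q = - k (r t) q := by
    intro t ht q
    have h1 := heq2₁ t ht q
    have h2 := heq2₂ t ht q
    simp only [hw'_def, hr_def, map_sub, LinearMap.sub_apply]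
    linarith
  -- continuous bilinear version of a
  obtain ⟨A, hAa⟩ : ∃ A : V →L[ℝ] V →L[ℝ] ℝ, ∀ u v : V, A u v = a u v :=
    ⟨LinearMap.mkContinuous₂ a (max Ca 0) (fun u v => by
      calc ‖a u v‖ ≤ Ca * ‖u‖ * ‖v‖ := ha u v
      _ ≤ max Ca 0 * ‖u‖ * ‖v‖ :=
          mul_le_mul_of_nonneg_right (mul_le_mul_of_nonneg_right (le_max_left Ca 0)
            (norm_nonneg u)) (norm_nonneg v)), fun _ _ => rfl⟩
  set E : ℝ → ℝ := fun t => A (w t) (w t) with hE_def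
  set E' : ℝ → ℝ := fun t => A (w' t) (w t) + A (w t) (w' t) with hE'_def
  have hE : ∀ t ∈ Set.Icc (0 : ℝ) T, HasDerivAt E (E' t) t := by
    intro t ht
    have h1 : HasDerivAt (fun s => A (w s)) (A (w' t)) t := A.hasFDerivAt.comp_hasDerivAt t (hw t ht)
    exact h1.clm_apply (hw t ht)
  -- E' ≤ 0 on Icc
  have hE'le : ∀ t ∈ Set.Icc (0 : ℝ) T, E' t ≤ 0 := by
    intro t ht
    have h1 : A (w' t) (w t) = a (w t) (w' t) := (hAa _ _).trans (hsymm (w' t) (w t))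
    have h2 : A (w t) (w' t) = a (w t) (w' t) := hAa _ _
    have h3 : a (w t) (w' t) = - k (r t) (r t) := by
      rw [haz t ht (w' t), hbz t ht (r t)]
    have h4 : κ * ‖r t‖ ^ 2 ≤ k (r t) (r t) := hkcoer (r t)
    have h5 : 0 ≤ κ * ‖r t‖ ^ 2 := by positivity
    simp only [hE'_def]
    rw [h1, h2, h3]
    linarith
  -- E antitone on Icc
  have hconv : Convex ℝ (Set.Icc (0 : ℝ) T) := convex_Icc 0 T
  have hcont : ContinuousOn E (Set.Icc (0 : ℝ) T) := fun t ht =>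
    (hE t ht).continuousAt.continuousWithinAt
  have hanti : AntitoneOn E (Set.Icc (0 : ℝ) T) := by
    apply antitoneOn_of_deriv_nonpos hconv hcont
      (fun x hx => (hE x (interior_subset hx)).differentiableAt.differentiableWithinAt)
    intro x hx
    have hx' : x ∈ Set.Icc (0 : ℝ) T := interior_subset hx
    rw [(hE x hx').deriv]
    exact hE'le x hx'
  intro t ht
  have h0T : (0 : ℝ) ∈ Set.Icc (0 : ℝ) T := ⟨le_refl 0, ht.1.trans ht.2⟩
  have hE0 : E 0 = 0 := by
    have hw0 : w 0 = 0 := by simp [hw_def, h0]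
    simp only [hE_def, hw0, map_zero, ContinuousLinearMap.zero_apply]
  have hEt : E t ≤ 0 := by
    have := hanti h0T ht ht.1
    rwa [hE0] at this
  have hwt : w t = 0 := by
    have hEeq : E t = a (w t) (w t) := hAa (w t) (w t)
    have h1 : α * ‖w t‖ ^ 2 ≤ E t := hEeq ▸ hacoer (w t)
    have h2 : α * ‖w t‖ ^ 2 ≤ α * 0 := by rw [mul_zero]; exact h1.trans hEt
    have h3 : ‖w t‖ ^ 2 = 0 := le_antisymm (le_of_mul_le_mul_left h2 hα) (sq_nonneg _)
    exact norm_eq_zero.mp (pow_eq_zero_iff two_ne_zero |>.mp h3)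
  have hu : u₁ t = u₂ t := by
    have := hwt; simpa [hw_def, sub_eq_zero] using this
  refine ⟨hu, ?_⟩
  have hbr : b (w' t) (r t) = a (w t) (w' t) := (haz t ht (w' t)).symm
  have hkr : k (r t) (r t) = 0 := by
    have h1 := hbz t ht (r t)
    rw [hbr, hwt] at h1
    simp only [map_zero, LinearMap.zero_apply] at h1
    linarith
  have hrt : r t = 0 := by
    have h1 : κ * ‖r t‖ ^ 2 ≤ κ * 0 := by rw [mul_zero]; exact hkr ▸ hkcoer (r t)
    have h3 : ‖r t‖ ^ 2 = 0 := le_antisymm (le_of_mul_le_mul_left h1 hκ) (sq_nonneg _)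
    exact norm_eq_zero.mp (pow_eq_zero_iff two_ne_zero |>.mp h3)
  simpa [hr_def, sub_eq_zero] using hrt
end

section
/- Let V and Q₀ be real Hilbert spaces, a : V × V → ℝ a continuous symmetric bilinear form with a(v,v) ≥ α‖v‖² for all v ∈ V (α > 0), and b : V × Q₀ → ℝ a continuous bilinear form satisfying the inf-sup condition: there exists β > 0 such that sup_{v ∈ V, ‖v‖ ≤ 1} b(v,q) ≥ β‖q‖ for all q ∈ Q₀. Then for every f₀ ∈ V* and every φ₀ ∈ Q₀* there exists a unique pair (u₀,p₀) ∈ V × Q₀ such that a(u₀,v) − b(v,p₀) = f₀(v) for all v ∈ V and b(u₀,q) = φ₀(q) for all q ∈ Q₀. -/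
open RealInnerProductSpace

/-!
Represent `b` by the operator `E : Q₀ → V` with `⟪E q, v⟫ = b(v, q)`. The inf-sup condition says
`β‖q‖ ≤ ‖E q‖`, so `E` is injective with closed range, and Lax–Milgram for the coercive form
`⟪E p, E q⟫` shows that every `φ₀` is `q ↦ ⟪E q, u_φ⟫` for some `u_φ`. The kernel of `b` is
`Z = (range E)ᗮ`; Lax–Milgram for `a` on `Z` gives the correction `z ∈ Z` making `u₀ = u_φ + z`
satisfy the first equation on `Z`. Its residual `a(u₀, ·) - f₀` is then orthogonal to `Z`, hence
lies in `Zᗮ = range E`, and this produces `p₀`. For uniqueness, homogeneous data give `u₀ ∈ Z`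
with `a(u₀, u₀) = 0`, so `u₀ = 0`, and then `E p₀ = 0`, so `p₀ = 0`.
-/

theorem IsCoercive.exists_forall_apply_eq {V : Type*} [NormedAddCommGroup V]
    [InnerProductSpace ℝ V] [CompleteSpace V] {B : V →L[ℝ] V →L[ℝ] ℝ} (hB : IsCoercive B)
    (f : StrongDual ℝ V) : ∃ u, ∀ v, B u v = f v := by
  refine ⟨hB.continuousLinearEquivOfBilin.symm ((InnerProductSpace.toDual ℝ V).symm f), fun v ↦ ?_⟩
  rw [← hB.continuousLinearEquivOfBilin_apply, ContinuousLinearEquiv.apply_symm_apply,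
    InnerProductSpace.toDual_symm_apply]

section

variable {V : Type*} [NormedAddCommGroup V] [InnerProductSpace ℝ V]

theorem Submodule.exists_mem_forall_mem_apply_eq_of_coercive (K : Submodule ℝ V)
    [CompleteSpace K] (a : V →L[ℝ] V →L[ℝ] ℝ) {α : ℝ} (hα : 0 < α)
    (hcoer : ∀ v ∈ K, α * ‖v‖ ^ 2 ≤ a v v) (f : StrongDual ℝ V) :
    ∃ u ∈ K, ∀ v ∈ K, a u v = f v := by
  have hK : IsCoercive (a.bilinearComp K.subtypeL K.subtypeL) :=
    ⟨α, hα, fun v ↦ by simpa [sq, mul_assoc] using hcoer v v.2⟩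
  obtain ⟨u, hu⟩ := hK.exists_forall_apply_eq (f.comp K.subtypeL)
  exact ⟨u, u.2, fun v hv ↦ hu ⟨v, hv⟩⟩

theorem exists_inner_eq_of_bilin [CompleteSpace V] {Q : Type*} [NormedAddCommGroup Q]
    [InnerProductSpace ℝ Q] (b : V →L[ℝ] Q →L[ℝ] ℝ) :
    ∃ E : Q →L[ℝ] V, ∀ q v, ⟪E q, v⟫ = b v q :=
  ⟨(InnerProductSpace.toDual ℝ V).symm.toContinuousLinearEquiv.toContinuousLinearMap ∘L b.flip,
    fun _ _ ↦ InnerProductSpace.toDual_symm_apply⟩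

theorem iSup_inner_le_norm (w : V) : ⨆ v : {v : V // ‖v‖ ≤ 1}, ⟪w, v.1⟫ ≤ ‖w‖ := by
  have : Nonempty {v : V // ‖v‖ ≤ 1} := ⟨⟨0, by simp⟩⟩
  refine ciSup_le fun v ↦ ?_
  calc ⟪w, v.1⟫ ≤ ‖w‖ * ‖v.1‖ := real_inner_le_norm _ _
    _ ≤ ‖w‖ := mul_le_of_le_one_right (norm_nonneg _) v.2

end

namespace ContinuousLinearMap

variable {V Q : Type*} [NormedAddCommGroup V] [InnerProductSpace ℝ V]
  [NormedAddCommGroup Q] [InnerProductSpace ℝ Q] {E : Q →L[ℝ] V} {β : ℝ}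

theorem antilipschitz_of_bounded_below (hβ : 0 < β) (hE : ∀ q, β * ‖q‖ ≤ ‖E q‖) :
    AntilipschitzWith ⟨β⁻¹, (inv_pos.mpr hβ).le⟩ E :=
  E.antilipschitz_of_bound fun q ↦ by
    show ‖q‖ ≤ β⁻¹ * ‖E q‖
    rw [← div_eq_inv_mul, le_div_iff₀' hβ]
    exact hE q

theorem orthogonal_orthogonal_range_of_bounded_below [CompleteSpace V] [CompleteSpace Q]
    (hβ : 0 < β) (hE : ∀ q, β * ‖q‖ ≤ ‖E q‖) : E.rangeᗮᗮ = E.range := by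
  have : CompleteSpace E.range :=
    ((antilipschitz_of_bounded_below hβ hE).isClosed_range E.uniformContinuous).completeSpace_coe
  exact E.range.orthogonal_orthogonal

theorem exists_inner_apply_eq_of_bounded_below [CompleteSpace Q] (hβ : 0 < β)
    (hE : ∀ q, β * ‖q‖ ≤ ‖E q‖) (φ : StrongDual ℝ Q) : ∃ u, ∀ q, ⟪E q, u⟫ = φ q := by
  have hcoer : IsCoercive ((innerSL ℝ).bilinearComp E E) := by
    refine ⟨β ^ 2, by positivity, fun q ↦ ?_⟩
    have := mul_self_le_mul_self (by positivity) (hE q)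
    simp only [bilinearComp_apply, innerSL_apply_apply, real_inner_self_eq_norm_mul_norm]
    linarith
  obtain ⟨p, hp⟩ := hcoer.exists_forall_apply_eq φ
  exact ⟨E p, fun q ↦ by rw [real_inner_comm, ← hp q]; rfl⟩

end ContinuousLinearMap

section SaddlePoint

open ContinuousLinearMap

variable {V Q : Type*} [NormedAddCommGroup V] [InnerProductSpace ℝ V]
  [NormedAddCommGroup Q] [InnerProductSpace ℝ Q]
  (a : V →L[ℝ] V →L[ℝ] ℝ) (E : Q →L[ℝ] V) {α β : ℝ}

theorem exists_saddle_point [CompleteSpace V] [CompleteSpace Q] (hα : 0 < α)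
    (hcoer : ∀ v ∈ E.rangeᗮ, α * ‖v‖ ^ 2 ≤ a v v)
    (hβ : 0 < β) (hE : ∀ q, β * ‖q‖ ≤ ‖E q‖) (f : StrongDual ℝ V) (φ : StrongDual ℝ Q) :
    ∃ u p, (∀ v, a u v - ⟪E p, v⟫ = f v) ∧ ∀ q, ⟪E q, u⟫ = φ q := by
  obtain ⟨uφ, huφ⟩ := exists_inner_apply_eq_of_bounded_below hβ hE φ
  obtain ⟨z, hzZ, hz⟩ :=
    E.rangeᗮ.exists_mem_forall_mem_apply_eq_of_coercive a hα hcoer (f - a uφ)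
  have hEz : ∀ q, ⟪E q, z⟫ = 0 := fun q ↦
    Submodule.inner_right_of_mem_orthogonal (LinearMap.mem_range_self _ q) hzZ
  set u := uφ + z
  have hu : ∀ q, ⟪E q, u⟫ = φ q := fun q ↦ by rw [inner_add_right, huφ, hEz, add_zero]
  obtain ⟨p, hp⟩ : (InnerProductSpace.toDual ℝ V).symm (a u - f) ∈ E.range := by
    rw [← orthogonal_orthogonal_range_of_bounded_below hβ hE]
    intro v hv
    rw [real_inner_comm, InnerProductSpace.toDual_symm_apply]
    simp [u, hz v hv]
  refine ⟨u, p, fun v ↦ ?_, hu⟩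
  rw [← E.coe_coe, hp, InnerProductSpace.toDual_symm_apply]
  simp

theorem eq_zero_of_saddle_point_homogeneous (hα : 0 < α)
    (hcoer : ∀ v ∈ E.rangeᗮ, α * ‖v‖ ^ 2 ≤ a v v) (hβ : 0 < β) (hE : ∀ q, β * ‖q‖ ≤ ‖E q‖)
    {u : V} {p : Q} (h₁ : ∀ v, a u v = ⟪E p, v⟫) (h₂ : ∀ q, ⟪E q, u⟫ = 0) : u = 0 ∧ p = 0 := by
  have huZ : u ∈ E.rangeᗮ := by
    rintro _ ⟨q, rfl⟩
    exact h₂ q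
  have hu : u = 0 := by
    have := hcoer u huZ
    rw [h₁, h₂] at this
    simpa using nonpos_of_mul_nonpos_right this hα
  refine ⟨hu, (antilipschitz_of_bounded_below hβ hE).injective (?_ : E p = E 0)⟩
  rw [map_zero, ← inner_self_eq_zero (𝕜 := ℝ), ← h₁, hu, map_zero, zero_apply]

theorem existsUnique_saddle_point [CompleteSpace V] [CompleteSpace Q] (hα : 0 < α)
    (hcoer : ∀ v ∈ E.rangeᗮ, α * ‖v‖ ^ 2 ≤ a v v) (hβ : 0 < β) (hE : ∀ q, β * ‖q‖ ≤ ‖E q‖)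
    (f : StrongDual ℝ V) (φ : StrongDual ℝ Q) :
    ∃! up : V × Q, (∀ v, a up.1 v - ⟪E up.2, v⟫ = f v) ∧ ∀ q, ⟪E q, up.1⟫ = φ q := by
  obtain ⟨u, p, h₁, h₂⟩ := exists_saddle_point a E hα hcoer hβ hE f φ
  refine ⟨(u, p), ⟨h₁, h₂⟩, ?_⟩
  rintro ⟨u', p'⟩ ⟨h₁', h₂'⟩
  obtain ⟨hu, hp⟩ := eq_zero_of_saddle_point_homogeneous a E hα hcoer hβ hE
    (u := u' - u) (p := p' - p)
    (fun v ↦ by simp only [map_sub, sub_apply, inner_sub_left]; linarith [h₁ v, h₁' v])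
    (fun q ↦ by rw [inner_sub_right, h₂, h₂', sub_self])
  rw [sub_eq_zero] at hu hp
  rw [hu, hp]

end SaddlePoint

theorem stmt_7_general {V Q₀ : Type*} [NormedAddCommGroup V] [InnerProductSpace ℝ V] [CompleteSpace V]
    [NormedAddCommGroup Q₀] [InnerProductSpace ℝ Q₀] [CompleteSpace Q₀]
    (a : V →ₗ[ℝ] V →ₗ[ℝ] ℝ) (b : V →ₗ[ℝ] Q₀ →ₗ[ℝ] ℝ)
    (Ca Cb α β : ℝ) (hα : 0 < α) (hβ : 0 < β)
    (ha : ∀ u v : V, |a u v| ≤ Ca * ‖u‖ * ‖v‖)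
    (hacoer : ∀ v : V, α * ‖v‖ ^ 2 ≤ a v v)
    (hb : ∀ (v : V) (q : Q₀), |b v q| ≤ Cb * ‖v‖ * ‖q‖)
    (hinfsup : ∀ q : Q₀, β * ‖q‖ ≤ ⨆ v : {v : V // ‖v‖ ≤ 1}, b v.1 q) :
    ∀ (f₀ : V →L[ℝ] ℝ) (φ₀ : Q₀ →L[ℝ] ℝ),
      ∃! up : V × Q₀,
        (∀ v : V, a up.1 v - b v up.2 = f₀ v) ∧ (∀ q : Q₀, b up.1 q = φ₀ q) := by
  intro f₀ φ₀
  obtain ⟨E, hE⟩ := exists_inner_eq_of_bilin (b.mkContinuous₂ Cb hb)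
  simp only [LinearMap.mkContinuous₂_apply] at hE
  have hEβ : ∀ q, β * ‖q‖ ≤ ‖E q‖ := fun q ↦
    (hinfsup q).trans (by simpa only [hE] using iSup_inner_le_norm (E q))
  simpa only [hE, LinearMap.mkContinuous₂_apply] using
    existsUnique_saddle_point (a.mkContinuous₂ Ca ha) E hα (fun v _ ↦ hacoer v) hβ hEβ f₀ φ₀

/-- Brezzi's splitting lemma (well-posedness of the stationary saddle-point
problem). With `a` continuous, symmetric and coercive on `V` and `b` continuous and inf-sup
stable on `V × Q₀`, for all data `f₀ ∈ V*`, `φ₀ ∈ Q₀*` there is a unique pair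
`(u₀, p₀) ∈ V × Q₀` with `a(u₀,v) − b(v,p₀) = f₀(v)` for all `v` and `b(u₀,q) = φ₀(q)`
for all `q`. -/
theorem stmt_7 {V Q₀ : Type*} [NormedAddCommGroup V] [InnerProductSpace ℝ V] [CompleteSpace V]
    [NormedAddCommGroup Q₀] [InnerProductSpace ℝ Q₀] [CompleteSpace Q₀]
    (a : V →ₗ[ℝ] V →ₗ[ℝ] ℝ) (b : V →ₗ[ℝ] Q₀ →ₗ[ℝ] ℝ)
    (Ca Cb α β : ℝ) (hα : 0 < α) (hβ : 0 < β)
    (hsymm : ∀ u v : V, a u v = a v u)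
    (ha : ∀ u v : V, |a u v| ≤ Ca * ‖u‖ * ‖v‖)
    (hacoer : ∀ v : V, α * ‖v‖ ^ 2 ≤ a v v)
    (hb : ∀ (v : V) (q : Q₀), |b v q| ≤ Cb * ‖v‖ * ‖q‖)
    (hinfsup : ∀ q : Q₀, β * ‖q‖ ≤ ⨆ v : {v : V // ‖v‖ ≤ 1}, b v.1 q) :
    ∀ (f₀ : V →L[ℝ] ℝ) (φ₀ : Q₀ →L[ℝ] ℝ),
      ∃! up : V × Q₀,
        (∀ v : V, a up.1 v - b v up.2 = f₀ v) ∧ (∀ q : Q₀, b up.1 q = φ₀ q) :=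
  stmt_7_general a b Ca Cb α β hα hβ ha hacoer hb hinfsup
end

section
/- Let A be an n×n real positive definite matrix, K₁ an m₁×m₁ real positive definite matrix, and B₂ an m₂×n real matrix such that the linear map x ↦ B₂x from ℝⁿ to ℝ^{m₂} is surjective. Then the (n+m₁+m₂)×(n+m₁+m₂) block matrix with block rows [A, 0, −B₂ᵀ], [0, K₁, 0], [B₂, 0, 0] is invertible. -/
/-!
Grouping the first two block rows, the matrix is the saddle-point matrix `[A', -Bᵀ; B, 0]` with
`A' = diag(A, K₁)` positive definite and `B = [B₂, 0]` surjective. Its kernel is trivial: if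
`A' x = Bᵀ y` and `B x = 0`, then `xᵀ A' x = (B x)ᵀ y = 0`, so `x = 0`; then `Bᵀ y = 0`, and
writing `y = B z` gives `yᵀ y = zᵀ Bᵀ y = 0`.
-/

open Matrix

namespace Matrix

variable {m n k R : Type*}

theorem PosDef.fromBlocks_zero_zero [Ring R] [PartialOrder R] [StarRing R] [StarOrderedRing R]
    [Fintype m] [Fintype n] {A : Matrix m m R} {D : Matrix n n R} (hA : A.PosDef)
    (hD : D.PosDef) : (fromBlocks A 0 0 D).PosDef := by
  refine .of_dotProduct_mulVec_pos (hA.isHermitian.fromBlocks (by simp) hD.isHermitian) ?_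
  rintro v hv
  obtain ⟨x, y, rfl⟩ : ∃ x y, v = Sum.elim x y := ⟨_, _, (Sum.elim_comp_inl_inr v).symm⟩
  simp only [fromBlocks_mulVec, Sum.elim_comp_inl, Sum.elim_comp_inr, zero_mulVec, add_zero,
    zero_add, Function.star_sumElim, sumElim_dotProduct_sumElim]
  obtain rfl | hx := eq_or_ne x 0
  · have hy : y ≠ 0 := by
      rintro rfl
      exact hv Sum.elim_zero_zero
    simpa using hD.dotProduct_mulVec_pos hy
  · exact add_pos_of_pos_of_nonneg (hA.dotProduct_mulVec_pos hx)
      (hD.posSemidef.dotProduct_mulVec_nonneg y)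

theorem surjective_fromCols_mulVec [Semiring R] [Fintype n] [Fintype k] {B : Matrix m n R}
    (C : Matrix m k R) (hB : Function.Surjective B.mulVec) :
    Function.Surjective (fromCols B C).mulVec := by
  rintro y
  obtain ⟨x, rfl⟩ := hB y
  exact ⟨Sum.elim x 0, by rw [fromCols_mulVec_sumElim, mulVec_zero, add_zero]⟩

variable [Fintype m] [Fintype n] [Field R] [PartialOrder R] [StarRing R] [StarOrderedRing R]

theorem eq_zero_of_conjTranspose_mulVec_eq_zero {B : Matrix m n R}
    (hB : Function.Surjective B.mulVec) {y : m → R} (hy : Bᴴ *ᵥ y = 0) : y = 0 := by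
  obtain ⟨z, rfl⟩ := hB y
  rw [← dotProduct_star_self_eq_zero, star_mulVec, ← dotProduct_mulVec, hy, dotProduct_zero]

theorem isUnit_fromBlocks_neg_conjTranspose [DecidableEq m] [DecidableEq n]
    {A : Matrix n n R} {B : Matrix m n R} (hA : A.PosDef) (hB : Function.Surjective B.mulVec) :
    IsUnit (fromBlocks A (-Bᴴ) B 0) := by
  refine mulVec_injective_iff_isUnit.mp <|
    (injective_iff_map_eq_zero (mulVecLin _)).mpr fun v hv => ?_
  obtain ⟨x, y, rfl⟩ : ∃ x y, v = Sum.elim x y := ⟨_, _, (Sum.elim_comp_inl_inr v).symm⟩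
  rw [← Sum.elim_zero_zero] at hv ⊢
  simp only [mulVecLin_apply, fromBlocks_mulVec, Sum.elim_comp_inl, Sum.elim_comp_inr,
    Sum.elim_eq_iff, neg_mulVec, zero_mulVec, add_zero, add_neg_eq_zero] at hv ⊢
  obtain ⟨hAx, hBx⟩ := hv
  have hx : x = 0 := by
    by_contra hx
    have hpos := hA.dotProduct_mulVec_pos hx
    rw [hAx, dotProduct_mulVec, ← star_mulVec, hBx, star_zero, zero_dotProduct] at hpos
    exact hpos.false
  refine ⟨hx, eq_zero_of_conjTranspose_mulVec_eq_zero hB ?_⟩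
  rw [← hAx, hx, mulVec_zero]

end Matrix

/-- For `A` an `n×n` real positive definite matrix, `K₁` an `m₁×m₁` real
positive definite matrix and `B₂` an `m₂×n` real matrix with `x ↦ B₂ x` surjective, the
block matrix with block rows `[A, 0, −B₂ᵀ]`, `[0, K₁, 0]`, `[B₂, 0, 0]` is invertible. -/
theorem stmt_10 {n m₁ m₂ : ℕ} (A : Matrix (Fin n) (Fin n) ℝ)
    (K₁ : Matrix (Fin m₁) (Fin m₁) ℝ) (B₂ : Matrix (Fin m₂) (Fin n) ℝ)
    (hA : A.PosDef) (hK : K₁.PosDef) (hB : Function.Surjective B₂.mulVec) :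
    IsUnit (Matrix.fromBlocks (Matrix.fromBlocks A 0 0 K₁)
      (Matrix.fromRows (-B₂ᵀ) (0 : Matrix (Fin m₁) (Fin m₂) ℝ))
      (Matrix.fromCols B₂ (0 : Matrix (Fin m₂) (Fin m₁) ℝ))
      (0 : Matrix (Fin m₂) (Fin m₂) ℝ)) := by
  have h := isUnit_fromBlocks_neg_conjTranspose (hA.fromBlocks_zero_zero hK)
    (surjective_fromCols_mulVec (0 : Matrix (Fin m₂) (Fin m₁) ℝ) hB)
  rwa [conjTranspose_eq_transpose_of_trivial, transpose_fromCols, fromRows_neg, transpose_zero,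
    neg_zero] at h
end

section
/- Let A be an n×n real positive definite matrix, K an m×m real positive definite matrix, and B an m×n real matrix such that the linear map x ↦ Bx from ℝⁿ to ℝᵐ is surjective. Let f : ℝ → ℝⁿ be continuously differentiable, g : ℝ → ℝᵐ continuous, and let u₀ ∈ ℝⁿ, p₀ ∈ ℝᵐ satisfy the compatibility condition A u₀ − Bᵀ p₀ = f(0). Then there exists a unique pair of differentiable functions u : ℝ → ℝⁿ, p : ℝ → ℝᵐ with u(0) = u₀, p(0) = p₀ such that for all t ∈ ℝ: A u(t) − Bᵀ p(t) = f(t) and B u'(t) + K p(t) = g(t). -/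
/-!
The first equation gives `u = A⁻¹ (Bᵀ p + f)`. Substituting it into the second turns the system
into the linear ODE `S p' + K p = g - B A⁻¹ f'` with `S = B A⁻¹ Bᵀ`, which is positive definite
since `A⁻¹` is and `Bᵀ` is injective. With `S` invertible this ODE has a unique global solution
through `p₀` (variation of constants for existence, Grönwall for uniqueness), and the
compatibility condition makes `u (0) = u₀`.
-/

open Matrix NormedSpace

section LinearODE

variable {E : Type*} [NormedAddCommGroup E] [NormedSpace ℝ E] [CompleteSpace E]

theorem exp_smul_mul_exp_neg_smul (M : E →L[ℝ] E) (t : ℝ) :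
    exp (t • M) * exp ((-t) • M) = 1 := by
  let : NormedAlgebra ℚ (E →L[ℝ] E) := .restrictScalars ℚ ℝ _
  rw [← exp_add_of_commute ((Commute.refl M).smul_left t |>.smul_right (-t)), ← add_smul,
    add_neg_cancel, zero_smul, exp_zero]

theorem exists_hasDerivAt_clm_apply_add (M : E →L[ℝ] E) {c : ℝ → E} (hc : Continuous c)
    (p₀ : E) : ∃ p : ℝ → E, p 0 = p₀ ∧ ∀ t, HasDerivAt p (M (p t) + c t) t := by
  set w : ℝ → E := fun s => exp ((-s) • M) (c s)
  have hw : Continuous w := by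
    let : NormedAlgebra ℚ (E →L[ℝ] E) := .restrictScalars ℚ ℝ _
    fun_prop
  refine ⟨fun t => exp (t • M) (p₀ + ∫ s in (0 : ℝ)..t, w s), by simp, fun t => ?_⟩
  have hF : HasDerivAt (fun t => p₀ + ∫ s in (0 : ℝ)..t, w s) (w t) t :=
    (hw.integral_hasStrictDerivAt 0 t).hasDerivAt.const_add p₀
  convert (hasDerivAt_exp_smul_const' M t).clm_apply hF using 1
  exact congrArg _ (DFunLike.congr_fun (exp_smul_mul_exp_neg_smul M t) (c t)).symm

theorem existsUnique_hasDerivAt_clm_apply_add (M : E →L[ℝ] E) {c : ℝ → E} (hc : Continuous c)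
    (p₀ : E) : ∃! p : ℝ → E, p 0 = p₀ ∧ ∀ t, HasDerivAt p (M (p t) + c t) t := by
  obtain ⟨p, hp0, hp⟩ := exists_hasDerivAt_clm_apply_add M hc p₀
  refine ⟨p, ⟨hp0, hp⟩, fun q ⟨hq0, hq⟩ => ?_⟩
  exact ODE_solution_unique_univ (v := fun t x => M x + c t) (s := fun _ => Set.univ)
    (fun t => (M.lipschitz.add (LipschitzWith.const (c t))).lipschitzOnWith)
    (fun t => ⟨hq t, trivial⟩) (fun t => ⟨hp t, trivial⟩) (hq0.trans hp0.symm)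

end LinearODE

section MatrixLemmas

variable {ι κ R : Type*} [Fintype ι] [Fintype κ]

theorem Matrix.vecMul_injective_of_mulVec_surjective [CommRing R] [LinearOrder R]
    [IsStrictOrderedRing R] {B : Matrix κ ι R} (hB : Function.Surjective B.mulVec) :
    Function.Injective B.vecMul := by
  intro x y (hxy : x ᵥ* B = y ᵥ* B)
  obtain ⟨z, hz⟩ := hB (x - y)
  have hsq : (x - y) ⬝ᵥ (x - y) = 0 := by
    nth_rewrite 2 [← hz]
    rw [dotProduct_mulVec, sub_vecMul, hxy, sub_self, zero_dotProduct]
  exact sub_eq_zero.1 (dotProduct_self_eq_zero.1 hsq)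

theorem Matrix.mulVec_eq_iff_eq_inv_mulVec [DecidableEq ι] [CommRing R] {A : Matrix ι ι R}
    (hA : IsUnit A) {x y : ι → R} : A *ᵥ x = y ↔ x = A⁻¹ *ᵥ y := by
  have hdet := (isUnit_iff_isUnit_det A).1 hA
  constructor
  · rintro rfl
    rw [mulVec_mulVec, nonsing_inv_mul _ hdet, one_mulVec]
  · rintro rfl
    rw [mulVec_mulVec, mul_nonsing_inv _ hdet, one_mulVec]

theorem HasDerivAt.const_mulVec {𝕜 : Type*} [NontriviallyNormedField 𝕜] [CompleteSpace 𝕜]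
    (N : Matrix κ ι 𝕜) {q : 𝕜 → ι → 𝕜} {q' : ι → 𝕜} {t : 𝕜} (hq : HasDerivAt q q' t) :
    HasDerivAt (fun s => N *ᵥ q s) (N *ᵥ q') t :=
  N.mulVecLin.toContinuousLinearMap.hasFDerivAt.comp_hasDerivAt t hq

theorem schur_elim_iff [CommRing R] [DecidableEq ι] [DecidableEq κ] {A : Matrix ι ι R}
    {B : Matrix κ ι R} (K : Matrix κ κ R) (hS : IsUnit (B * A⁻¹ * Bᵀ)) (p p' g : κ → R)
    (f' : ι → R) :
    B *ᵥ (A⁻¹ *ᵥ (Bᵀ *ᵥ p' + f')) + K *ᵥ p = g ↔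
      p' = -((B * A⁻¹ * Bᵀ)⁻¹ * K) *ᵥ p + (B * A⁻¹ * Bᵀ)⁻¹ *ᵥ (g - (B * A⁻¹) *ᵥ f') := by
  have hexpand : B *ᵥ (A⁻¹ *ᵥ (Bᵀ *ᵥ p' + f')) = (B * A⁻¹ * Bᵀ) *ᵥ p' + (B * A⁻¹) *ᵥ f' := by
    simp only [mulVec_add, mulVec_mulVec, Matrix.mul_assoc]
  rw [hexpand, add_assoc, ← eq_sub_iff_add_eq, mulVec_eq_iff_eq_inv_mulVec hS]
  simp only [neg_mulVec, ← mulVec_mulVec, mulVec_sub, mulVec_add]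
  constructor <;> intro h <;> rw [h] <;> abel

end MatrixLemmas

theorem existsUnique_dae_solution_of_isUnit {ι κ : Type*} [Fintype ι] [DecidableEq ι]
    [Fintype κ] [DecidableEq κ] {A : Matrix ι ι ℝ} {B : Matrix κ ι ℝ} (K : Matrix κ κ ℝ)
    (hA : IsUnit A) (hS : IsUnit (B * A⁻¹ * Bᵀ)) {f : ℝ → ι → ℝ} {g : ℝ → κ → ℝ}
    (hf : ContDiff ℝ 1 f) (hg : Continuous g) {u₀ : ι → ℝ} {p₀ : κ → ℝ}
    (hcompat : A *ᵥ u₀ - Bᵀ *ᵥ p₀ = f 0) :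
    ∃! up : (ℝ → ι → ℝ) × (ℝ → κ → ℝ),
      Differentiable ℝ up.1 ∧ Differentiable ℝ up.2 ∧ up.1 0 = u₀ ∧ up.2 0 = p₀ ∧
        ∀ t, A *ᵥ up.1 t - Bᵀ *ᵥ up.2 t = f t ∧ B *ᵥ deriv up.1 t + K *ᵥ up.2 t = g t := by
  set S := B * A⁻¹ * Bᵀ
  let M : (κ → ℝ) →L[ℝ] κ → ℝ := (-(S⁻¹ * K)).mulVecLin.toContinuousLinearMap
  let c : ℝ → κ → ℝ := fun t => S⁻¹ *ᵥ (g t - (B * A⁻¹) *ᵥ deriv f t)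
  have hc : Continuous c := by
    have := hf.continuous_deriv le_rfl
    fun_prop
  have first_eq_iff : ∀ u p t, A *ᵥ u - Bᵀ *ᵥ p = f t ↔ u = A⁻¹ *ᵥ (Bᵀ *ᵥ p + f t) :=
    fun u p t => by rw [sub_eq_iff_eq_add', mulVec_eq_iff_eq_inv_mulVec hA]
  have hasDerivAt_u : ∀ (p : ℝ → κ → ℝ) t, DifferentiableAt ℝ p t →
      HasDerivAt (fun s => A⁻¹ *ᵥ (Bᵀ *ᵥ p s + f s))
        (A⁻¹ *ᵥ (Bᵀ *ᵥ deriv p t + deriv f t)) t := fun p t hp =>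
    ((hp.hasDerivAt.const_mulVec Bᵀ).add
      ((hf.differentiable one_ne_zero) t).hasDerivAt).const_mulVec A⁻¹
  have second_eq_iff : ∀ p : ℝ → κ → ℝ, Differentiable ℝ p → ∀ t,
      B *ᵥ deriv (fun s => A⁻¹ *ᵥ (Bᵀ *ᵥ p s + f s)) t + K *ᵥ p t = g t ↔
        deriv p t = M (p t) + c t := fun p hp t => by
    rw [(hasDerivAt_u p t (hp t)).deriv]
    exact schur_elim_iff K hS _ _ _ _
  obtain ⟨p, ⟨hp0, hp⟩, hp_unique⟩ := existsUnique_hasDerivAt_clm_apply_add M hc p₀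
  have hp_diff : Differentiable ℝ p := fun t => (hp t).differentiableAt
  refine ⟨(fun s => A⁻¹ *ᵥ (Bᵀ *ᵥ p s + f s), p),
    ⟨fun t => (hasDerivAt_u p t (hp_diff t)).differentiableAt, hp_diff, ?_, hp0, fun t =>
    ⟨(first_eq_iff _ _ t).2 rfl, (second_eq_iff p hp_diff t).2 (hp t).deriv⟩⟩, ?_⟩
  · show A⁻¹ *ᵥ (Bᵀ *ᵥ p 0 + f 0) = u₀
    rw [hp0, ← (first_eq_iff u₀ p₀ 0).1 hcompat]
  rintro ⟨u, q⟩ ⟨-, hq_diff, -, hq0, hsol⟩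
  obtain rfl : u = fun s => A⁻¹ *ᵥ (Bᵀ *ᵥ q s + f s) :=
    funext fun s => (first_eq_iff _ _ s).1 (hsol s).1
  obtain rfl : q = p := hp_unique q
    ⟨hq0, fun t => (second_eq_iff q hq_diff t).1 (hsol t).2 ▸ (hq_diff t).hasDerivAt⟩
  rfl

theorem stmt_12_general {n m : ℕ} (A : Matrix (Fin n) (Fin n) ℝ) (K : Matrix (Fin m) (Fin m) ℝ)
    (B : Matrix (Fin m) (Fin n) ℝ) (hA : A.PosDef)
    (hB : Function.Surjective B.mulVec)
    (f : ℝ → Fin n → ℝ) (g : ℝ → Fin m → ℝ) (hf : ContDiff ℝ 1 f) (hg : Continuous g)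
    (u₀ : Fin n → ℝ) (p₀ : Fin m → ℝ)
    (hcompat : A.mulVec u₀ - Bᵀ.mulVec p₀ = f 0) :
    ∃! up : (ℝ → Fin n → ℝ) × (ℝ → Fin m → ℝ),
      Differentiable ℝ up.1 ∧ Differentiable ℝ up.2 ∧
        up.1 0 = u₀ ∧ up.2 0 = p₀ ∧
        ∀ t : ℝ, A.mulVec (up.1 t) - Bᵀ.mulVec (up.2 t) = f t ∧
          B.mulVec (deriv up.1 t) + K.mulVec (up.2 t) = g t := by
  have hS : (B * A⁻¹ * Bᵀ).PosDef := by
    simpa only [conjTranspose_eq_transpose_of_trivial] using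
      hA.inv.mul_mul_conjTranspose_same (vecMul_injective_of_mulVec_surjective hB)
  exact existsUnique_dae_solution_of_isUnit K hA.isUnit hS.isUnit hf hg hcompat

/-- Existence and uniqueness for the index-1 DAE. With `A`, `K` positive
definite, `B` with surjective `x ↦ B x`, `f` continuously differentiable, `g` continuous,
and compatible initial data `A u₀ − Bᵀ p₀ = f(0)`, there is a unique pair of differentiable
functions `(u, p)` with `u(0) = u₀`, `p(0) = p₀`, satisfying for all `t`:
`A u(t) − Bᵀ p(t) = f(t)` and `B u'(t) + K p(t) = g(t)`. -/
theorem stmt_12 {n m : ℕ} (A : Matrix (Fin n) (Fin n) ℝ) (K : Matrix (Fin m) (Fin m) ℝ)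
    (B : Matrix (Fin m) (Fin n) ℝ) (hA : A.PosDef) (hK : K.PosDef)
    (hB : Function.Surjective B.mulVec)
    (f : ℝ → Fin n → ℝ) (g : ℝ → Fin m → ℝ) (hf : ContDiff ℝ 1 f) (hg : Continuous g)
    (u₀ : Fin n → ℝ) (p₀ : Fin m → ℝ)
    (hcompat : A.mulVec u₀ - Bᵀ.mulVec p₀ = f 0) :
    ∃! up : (ℝ → Fin n → ℝ) × (ℝ → Fin m → ℝ),
      Differentiable ℝ up.1 ∧ Differentiable ℝ up.2 ∧
        up.1 0 = u₀ ∧ up.2 0 = p₀ ∧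
        ∀ t : ℝ, A.mulVec (up.1 t) - Bᵀ.mulVec (up.2 t) = f t ∧
          B.mulVec (deriv up.1 t) + K.mulVec (up.2 t) = g t :=
  stmt_12_general A K B hA hB f g hf hg u₀ p₀ hcompat
end

section
/- Let V, Q, Q₀ be real Hilbert spaces, i : Q → Q₀ a continuous linear map with ‖i q‖ ≤ ‖q‖ for all q ∈ Q, and B : V → Q₀ a continuous linear map. Let V_h ⊆ V and Q_h ⊆ Q be closed subspaces. Suppose δu : ℝ → V is continuously differentiable with δu(t) ∈ V_h for all t, δp : ℝ → Q is continuous with δp(t) ∈ Q_h for all t, r : ℝ → Q₀ is continuous, and for all t ≥ 0: (i) ⟪δu(t), v_h⟫_V = ⟪B v_h, i(δp(t))⟫_{Q₀} for all v_h ∈ V_h; (ii) ⟪B(δu'(t)), i(q_h)⟫_{Q₀} + ⟪δp(t), q_h⟫_Q = ⟪r(t), i(q_h)⟫_{Q₀} for all q_h ∈ Q_h; (iii) δu(0) = 0. Then for all t ≥ 0: ‖δu(t)‖_V² + ∫₀ᵗ ‖δp(s)‖_Q² ds ≤ ∫₀ᵗ ‖r(s)‖_{Q₀}² ds. -/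
/-!
Testing the first error equation with `δu'(t) ∈ V_h` (a derivative of a curve in a closed
subspace stays in it) and the second with `δp(t)` eliminates the coupling term `b(δu', δp)`:
`d/dt ‖δu‖² = 2⟪r, i δp⟫ - 2‖δp‖² ≤ ‖r‖² - ‖δp‖²`, using `‖i δp‖ ≤ ‖δp‖` and Young's inequality.
Integrating from `0`, where `δu` vanishes, gives the estimate.
-/

open Set MeasureTheory intervalIntegral
open scoped RealInnerProductSpace

theorem HasDerivAt.mem_of_forall_mem {𝕜 F : Type*} [NontriviallyNormedField 𝕜]
    [NormedAddCommGroup F] [NormedSpace 𝕜 F] {S : Submodule 𝕜 F} (hS : IsClosed (S : Set F))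
    {f : 𝕜 → F} {f' : F} {x : 𝕜} (hf : HasDerivAt f f' x) (hfS : ∀ t, f t ∈ S) : f' ∈ S :=
  hS.mem_of_tendsto (hasDerivAt_iff_tendsto_slope.mp hf)
    (Filter.Eventually.of_forall fun t => S.smul_mem _ (S.sub_mem (hfS t) (hfS x)))

section InnerProductSpace

variable {E : Type*} [NormedAddCommGroup E] [InnerProductSpace ℝ E]

theorem two_mul_inner_le_norm_sq_add_sq (x : E) {y : E} {c : ℝ} (hy : ‖y‖ ≤ c) :
    2 * ⟪x, y⟫ ≤ ‖x‖ ^ 2 + c ^ 2 := by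
  have hsq : ‖y‖ ^ 2 ≤ c ^ 2 := pow_le_pow_left₀ (norm_nonneg y) hy 2
  nlinarith [norm_sub_sq_real x y, sq_nonneg ‖x - y‖]

theorem norm_sq_sub_norm_sq_le_integral {f f' : ℝ → E} {g : ℝ → ℝ} {a b : ℝ} (hab : a ≤ b)
    (hf : ∀ t ∈ Icc a b, HasDerivAt f (f' t) t) (hg : IntegrableOn g (Icc a b))
    (hfg : ∀ t ∈ Ioo a b, 2 * ⟪f t, f' t⟫ ≤ g t) :
    ‖f b‖ ^ 2 - ‖f a‖ ^ 2 ≤ ∫ t in a..b, g t :=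
  sub_le_integral_of_hasDeriv_right_of_le hab
    (fun t ht => (hf t ht).norm_sq.continuousAt.continuousWithinAt)
    (fun t ht => (hf t (Ioo_subset_Icc_self ht)).norm_sq.hasDerivWithinAt) hg hfg

end InnerProductSpace

theorem stmt_14_general {V Q Q₀ : Type*}
    [NormedAddCommGroup V] [InnerProductSpace ℝ V]
    [NormedAddCommGroup Q] [InnerProductSpace ℝ Q]
    [NormedAddCommGroup Q₀] [InnerProductSpace ℝ Q₀]
    (i : Q →L[ℝ] Q₀) (hi : ∀ q : Q, ‖i q‖ ≤ ‖q‖) (B : V →L[ℝ] Q₀)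
    (Vh : Submodule ℝ V) (Qh : Submodule ℝ Q)
    (hVh : IsClosed (Vh : Set V))
    (δu δu' : ℝ → V) (δp : ℝ → Q) (r : ℝ → Q₀)
    (hδu : ∀ t : ℝ, HasDerivAt δu (δu' t) t)
    (hδuVh : ∀ t : ℝ, δu t ∈ Vh)
    (hδp : Continuous δp) (hδpQh : ∀ t : ℝ, δp t ∈ Qh)
    (hr : Continuous r)
    (heq1 : ∀ t ≥ (0 : ℝ), ∀ vh ∈ Vh, ⟪δu t, vh⟫ = ⟪B vh, i (δp t)⟫)
    (heq2 : ∀ t ≥ (0 : ℝ), ∀ qh ∈ Qh,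
      ⟪B (δu' t), i qh⟫ + ⟪δp t, qh⟫ = ⟪r t, i qh⟫)
    (h0 : δu 0 = 0) :
    ∀ t ≥ (0 : ℝ),
      ‖δu t‖ ^ 2 + ∫ s in (0 : ℝ)..t, ‖δp s‖ ^ 2 ≤ ∫ s in (0 : ℝ)..t, ‖r s‖ ^ 2 := by
  intro t ht
  have energy_rate : ∀ s ≥ (0 : ℝ), 2 * ⟪δu s, δu' s⟫ ≤ ‖r s‖ ^ 2 - ‖δp s‖ ^ 2 := by
    intro s hs
    have e1 := heq1 s hs (δu' s) ((hδu s).mem_of_forall_mem hVh hδuVh)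
    have e2 := heq2 s hs (δp s) (hδpQh s)
    have young := two_mul_inner_le_norm_sq_add_sq (r s) (hi (δp s))
    rw [real_inner_self_eq_norm_sq] at e2
    linarith
  have hp2 : Continuous fun s => ‖δp s‖ ^ 2 := hδp.norm.pow 2
  have hr2 : Continuous fun s => ‖r s‖ ^ 2 := hr.norm.pow 2
  have key := norm_sq_sub_norm_sq_le_integral (g := fun s => ‖r s‖ ^ 2 - ‖δp s‖ ^ 2) ht
    (fun s _ => hδu s) (hr2.sub hp2).integrableOn_Icc (fun s hs => energy_rate s hs.1.le)
  rw [h0, norm_zero, intervalIntegral.integral_sub (hr2.intervalIntegrable 0 t)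
    (hp2.intervalIntegrable 0 t)] at key
  linarith

/-- Discrete energy estimate for the Galerkin error components. With real
Hilbert spaces `V`, `Q`, `Q₀`, an embedding `i : Q → Q₀` with `‖i q‖ ≤ ‖q‖`, a continuous
linear map `B : V → Q₀`, closed subspaces `V_h ⊆ V`, `Q_h ⊆ Q`, and functions
`δu` (C¹, valued in `V_h`), `δp` (continuous, valued in `Q_h`), `r` (continuous) satisfying
the discrete error equations for `t ≥ 0` and `δu(0) = 0`, one has for all `t ≥ 0`:
`‖δu(t)‖² + ∫₀ᵗ ‖δp(s)‖² ds ≤ ∫₀ᵗ ‖r(s)‖² ds`. -/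
theorem stmt_14 {V Q Q₀ : Type*}
    [NormedAddCommGroup V] [InnerProductSpace ℝ V] [CompleteSpace V]
    [NormedAddCommGroup Q] [InnerProductSpace ℝ Q] [CompleteSpace Q]
    [NormedAddCommGroup Q₀] [InnerProductSpace ℝ Q₀] [CompleteSpace Q₀]
    (i : Q →L[ℝ] Q₀) (hi : ∀ q : Q, ‖i q‖ ≤ ‖q‖) (B : V →L[ℝ] Q₀)
    (Vh : Submodule ℝ V) (Qh : Submodule ℝ Q)
    (hVh : IsClosed (Vh : Set V)) (hQh : IsClosed (Qh : Set Q))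
    (δu δu' : ℝ → V) (δp : ℝ → Q) (r : ℝ → Q₀)
    (hδu : ∀ t : ℝ, HasDerivAt δu (δu' t) t) (hδu' : Continuous δu')
    (hδuVh : ∀ t : ℝ, δu t ∈ Vh)
    (hδp : Continuous δp) (hδpQh : ∀ t : ℝ, δp t ∈ Qh)
    (hr : Continuous r)
    (heq1 : ∀ t ≥ (0 : ℝ), ∀ vh ∈ Vh, ⟪δu t, vh⟫ = ⟪B vh, i (δp t)⟫)
    (heq2 : ∀ t ≥ (0 : ℝ), ∀ qh ∈ Qh,
      ⟪B (δu' t), i qh⟫ + ⟪δp t, qh⟫ = ⟪r t, i qh⟫)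
    (h0 : δu 0 = 0) :
    ∀ t ≥ (0 : ℝ),
      ‖δu t‖ ^ 2 + ∫ s in (0 : ℝ)..t, ‖δp s‖ ^ 2 ≤ ∫ s in (0 : ℝ)..t, ‖r s‖ ^ 2 :=
  stmt_14_general i hi B Vh Qh hVh δu δu' δp r hδu hδuVh hδp hδpQh hr heq1 heq2 h0
end
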